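/- arXiv:1908.02447 — 9 statements merged into one kernel-verified Lean document; each statement's English description precedes it below -/
import Mathlib

section
/- There exists a constant β_θ > 0, depending only on βmax, l and T, with β_θ ≥ βmax, such that for every initial output y₀ ∈ ℝ and every pair of input sequences u = (u(0),…,u(T−1)) and u' = (u'(0),…,u'(T−1)) with corresponding outputs y and y' generated by system (1), there exist real numbers θ_t(ξ) for 0 ≤ ξ ≤ t ≤ T−1 satisfying: (i) y(t+1) − y'(t+1) = Σ_{ξ=0}^{t} θ_t(ξ)·(u(ξ) − u'(ξ)) for every t ∈ {0,…,T−1}; (ii) |θ_t(ξ)| ≤ β_θ for all 0 ≤ ξ ≤ t ≤ T−1; and (iii) θ_t(t) ∈ [βmin, βmax] for every t ∈ {0,…,T−1}. -/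
/-!
By the mean value theorem on the segment joining the two regressor vectors, `y(t+1) - y'(t+1)`
is a combination of the coordinate differences of the regressors whose coefficients are the
partial derivatives of `f(·, t)` at a single intermediate point; they are bounded by `βmax`, and
the one in front of `u(t) - u'(t)` is `∂f/∂x_{l+2} ∈ [βmin, βmax]`. By strong induction, the past
output differences in the regressor are combinations of earlier input differences with
coefficients bounded by `D ^ t`, `D = (l + n + 2) βmax + 1`; substituting them yields coefficients
bounded by `D ^ (t + 1)`, and none of them involves `u(t) - u'(t)`.
-/

/-- The argument vector `(y(t),…,y(t−l), u(t),…,u(t−n))` fed to the nonlinearity of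
system (1), with the conventions `y(i) = 0` and `u(i) = 0` for `i < 0`. -/
def sysArg (l n : ℕ) (y u : ℕ → ℝ) (t : ℕ) : Fin (l + n + 2) → ℝ :=
  fun j =>
    if (j : ℕ) ≤ l then (if (j : ℕ) ≤ t then y (t - (j : ℕ)) else 0)
    else (if (j : ℕ) - (l + 1) ≤ t then u (t - ((j : ℕ) - (l + 1))) else 0)

/-- `y` is the output trajectory of system (1) generated by the nonlinearity `f`,
the initial output `y₀` and the input sequence `u`. -/
def IsTraj (l n T : ℕ) (f : (Fin (l + n + 2) → ℝ) → ℕ → ℝ) (y₀ : ℝ)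
    (u y : ℕ → ℝ) : Prop :=
  y 0 = y₀ ∧ ∀ t, t < T → y (t + 1) = f (sysArg l n y u t) t

open Finset

theorem exists_sub_eq_sum_fderiv_single_mul {m : ℕ} {F : (Fin m → ℝ) → ℝ}
    (hF : Differentiable ℝ F) (a b : Fin m → ℝ) :
    ∃ z, F a - F b = ∑ i, fderiv ℝ F z (Pi.single i 1) * (a i - b i) := by
  obtain ⟨z, -, hz⟩ := domain_mvt (fun x _ => (hF x).hasFDerivAt.hasFDerivWithinAt)
    convex_univ (Set.mem_univ b) (Set.mem_univ a)
  refine ⟨z, hz.trans ?_⟩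
  conv_lhs => rw [pi_eq_sum_univ' (a - b), map_sum]
  simp [mul_comm]

theorem sum_range_eq_sum_range_ite_of_le {M : Type*} [AddCommMonoid M] (g : ℕ → M) {N K : ℕ}
    (h : N ≤ K) : ∑ ξ ∈ range N, g ξ = ∑ ξ ∈ range K, if ξ < N then g ξ else 0 := by
  rw [← sum_filter]
  congr 1
  ext ξ
  simp only [mem_range, mem_filter]
  omega

def IsBoundedCombination (d : ℕ → ℝ) (N : ℕ) (K e : ℝ) : Prop :=
  ∃ θ : ℕ → ℝ, e = ∑ ξ ∈ range N, θ ξ * d ξ ∧ ∀ ξ, |θ ξ| ≤ K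

section Linearization

variable {l n t : ℕ} {y y' u u' : ℕ → ℝ} {K : ℝ}

theorem exists_sysArg_sub_eq_sum (hK : 1 ≤ K)
    (hy : ∀ s ≤ t, IsBoundedCombination (u - u') s K (y s - y' s)) (j : Fin (l + n + 2)) :
    ∃ v : ℕ → ℝ,
      sysArg l n y u t j - sysArg l n y' u' t j = ∑ ξ ∈ range (t + 1), v ξ * (u - u') ξ ∧
      (∀ ξ, |v ξ| ≤ K) ∧ v t = if j = ⟨l + 1, by omega⟩ then 1 else 0 := by
  have hj : j = ⟨l + 1, by omega⟩ ↔ (j : ℕ) = l + 1 := Fin.ext_iff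
  have hzero : (j : ℕ) ≠ l + 1 → ∃ v : ℕ → ℝ, (0 : ℝ) = ∑ ξ ∈ range (t + 1), v ξ * (u - u') ξ ∧
      (∀ ξ, |v ξ| ≤ K) ∧ v t = if j = ⟨l + 1, by omega⟩ then 1 else 0 := fun hjl =>
    ⟨0, by simp, fun _ => by rw [Pi.zero_apply, abs_zero]; linarith, by simp [hj, hjl]⟩
  by_cases hjl : (j : ℕ) ≤ l
  · by_cases hjt : (j : ℕ) ≤ t
    · obtain ⟨θ, he, hb⟩ := hy (t - j) (by omega)
      refine ⟨fun ξ => if ξ < t - j then θ ξ else 0, ?_, fun ξ => ?_, ?_⟩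
      · simp only [sysArg, if_pos hjl, if_pos hjt, he, ite_mul, zero_mul,
          sum_range_eq_sum_range_ite_of_le _ (by omega : t - j ≤ t + 1)]
      · dsimp only
        split_ifs
        · exact hb ξ
        · rw [abs_zero]; linarith
      · rw [if_neg (by rw [hj]; omega)]
        exact if_neg (by omega)
    · simpa [sysArg, hjl, hjt] using hzero (by omega)
  · by_cases hkt : (j : ℕ) - (l + 1) ≤ t
    · refine ⟨fun ξ => if ξ = t - (j - (l + 1)) then 1 else 0, ?_, fun ξ => ?_, ?_⟩
      · simp [sysArg, hjl, hkt, ite_mul, sum_ite_eq', show t - (j - (l + 1)) < t + 1 by omega]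
      · dsimp only
        split_ifs <;> simp only [abs_one, abs_zero] <;> linarith
      · simp only [hj]
        congr 1
        apply propext
        omega
    · simpa [sysArg, hjl, hkt] using hzero (by omega)

theorem exists_map_sysArg_sub_eq_sum {F : (Fin (l + n + 2) → ℝ) → ℝ} {βmin βmax : ℝ}
    (hF : Differentiable ℝ F) (hbd : ∀ x i, |fderiv ℝ F x (Pi.single i 1)| ≤ βmax)
    (hdiag : ∀ x, fderiv ℝ F x (Pi.single ⟨l + 1, by omega⟩ 1) ∈ Set.Icc βmin βmax)
    (hK : 1 ≤ K) (hy : ∀ s ≤ t, IsBoundedCombination (u - u') s K (y s - y' s)) :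
    ∃ θ : ℕ → ℝ,
      F (sysArg l n y u t) - F (sysArg l n y' u' t) = ∑ ξ ∈ range (t + 1), θ ξ * (u - u') ξ ∧
      (∀ ξ, |θ ξ| ≤ (l + n + 2) * βmax * K) ∧ θ t ∈ Set.Icc βmin βmax := by
  obtain ⟨z, hz⟩ := exists_sub_eq_sum_fderiv_single_mul hF (sysArg l n y u t) (sysArg l n y' u' t)
  set c := fun i => fderiv ℝ F z (Pi.single i 1)
  choose v hv hvb hvt using exists_sysArg_sub_eq_sum hK hy
  refine ⟨fun ξ => ∑ i, c i * v i ξ, ?_, fun ξ => ?_, ?_⟩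
  · rw [hz]
    simp_rw [hv, mul_sum, sum_mul, mul_assoc]
    exact sum_comm
  · calc |∑ i, c i * v i ξ| ≤ ∑ i, |c i * v i ξ| := abs_sum_le_sum_abs _ _
      _ ≤ ∑ _i : Fin (l + n + 2), βmax * K := sum_le_sum fun i _ => by
          rw [abs_mul]
          exact mul_le_mul (hbd z i) (hvb i ξ) (abs_nonneg _) ((abs_nonneg _).trans (hbd z i))
      _ = (l + n + 2) * βmax * K := by simp [mul_assoc]
  · simpa only [hvt, mul_ite, mul_one, mul_zero, sum_ite_eq', mem_univ, if_true] using hdiag z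

end Linearization

theorem exists_linearization_row {l n T : ℕ} {f : (Fin (l + n + 2) → ℝ) → ℕ → ℝ}
    {βmin βmax D y₀ : ℝ} {y y' u u' : ℕ → ℝ}
    (hf : ∀ t < T, Differentiable ℝ fun x => f x t)
    (hbd : ∀ t < T, ∀ x i, |fderiv ℝ (fun x => f x t) x (Pi.single i 1)| ≤ βmax)
    (hdiag : ∀ t < T, ∀ x,
      fderiv ℝ (fun x => f x t) x (Pi.single ⟨l + 1, by omega⟩ 1) ∈ Set.Icc βmin βmax)
    (hy : IsTraj l n T f y₀ u y) (hy' : IsTraj l n T f y₀ u' y')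
    (hD : 1 ≤ D) (hβD : (l + n + 2) * βmax ≤ D) :
    ∀ t < T, ∃ θ : ℕ → ℝ,
      y (t + 1) - y' (t + 1) = ∑ ξ ∈ range (t + 1), θ ξ * (u - u') ξ ∧
      (∀ ξ, |θ ξ| ≤ D ^ (t + 1)) ∧ θ t ∈ Set.Icc βmin βmax := by
  intro t
  induction t using Nat.strong_induction_on with
  | _ t ih =>
  intro ht
  have hprev : ∀ s ≤ t, IsBoundedCombination (u - u') s (D ^ t) (y s - y' s) := by
    rintro (_ | s) hs
    · exact ⟨0, by simp [hy.1, hy'.1], fun _ => by rw [Pi.zero_apply, abs_zero]; positivity⟩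
    · obtain ⟨θ, he, hb, -⟩ := ih s hs (by omega)
      exact ⟨θ, he, fun ξ => (hb ξ).trans (pow_le_pow_right₀ hD hs)⟩
  obtain ⟨θ, he, hb, hθt⟩ := exists_map_sysArg_sub_eq_sum (hf t ht) (hbd t ht) (hdiag t ht)
    (one_le_pow₀ hD) hprev
  refine ⟨θ, by rw [hy.2 t ht, hy'.2 t ht, he], fun ξ => (hb ξ).trans ?_, hθt⟩
  rw [pow_succ']
  exact mul_le_mul_of_nonneg_right hβD (by positivity)

/-- Lemma 1 of the paper: extended dynamical linearization of system (1) under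
Assumption (A1), with a bound `β_θ` depending only on `βmax`, `l` and `T`. -/
theorem stmt1 (l n T : ℕ) (hT : 1 ≤ T) (βmin βmax : ℝ)
    (hβmin : 0 < βmin) (hββ : βmin ≤ βmax) :
    ∃ βθ : ℝ, 0 < βθ ∧ βmax ≤ βθ ∧
      ∀ f : (Fin (l + n + 2) → ℝ) → ℕ → ℝ,
        (∀ t, t < T → ContDiff ℝ 1 fun x => f x t) →
        (∀ t, t < T → ∀ x, ∀ i, |fderiv ℝ (fun x => f x t) x (Pi.single i 1)| ≤ βmax) →
        (∀ t, t < T → ∀ x,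
          fderiv ℝ (fun x => f x t) x
              (Pi.single (⟨l + 1, by omega⟩ : Fin (l + n + 2)) 1)
            ∈ Set.Icc βmin βmax) →
        ∀ (y₀ : ℝ) (u u' y y' : ℕ → ℝ),
          IsTraj l n T f y₀ u y → IsTraj l n T f y₀ u' y' →
          ∃ θ : ℕ → ℕ → ℝ,
            (∀ t, t < T →
              y (t + 1) - y' (t + 1)
                = ∑ ξ ∈ Finset.range (t + 1), θ t ξ * (u ξ - u' ξ)) ∧
            (∀ t, t < T → ∀ ξ, ξ ≤ t → |θ t ξ| ≤ βθ) ∧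
            (∀ t, t < T → θ t t ∈ Set.Icc βmin βmax) := by
  set D : ℝ := (l + n + 2) * βmax + 1
  have hβ : 0 < βmax := hβmin.trans_le hββ
  have hD : 1 ≤ D := le_add_of_nonneg_left (by positivity)
  refine ⟨D ^ T, by positivity, ?_, ?_⟩
  · calc βmax ≤ D := by simp only [D]; nlinarith
      _ ≤ D ^ T := le_self_pow₀ hD (by omega)
  intro f hf hbd hdiag y₀ u u' y y' hy hy'
  have hrow := exists_linearization_row (fun t ht => (hf t ht).differentiable one_ne_zero)
    hbd hdiag hy hy' hD (by linarith)
  choose! θ hθ using hrow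
  exact ⟨θ, fun t ht => (hθ t ht).1, fun t ht ξ _ => ((hθ t ht).2.1 ξ).trans
    (pow_le_pow_right₀ hD ht), fun t ht => (hθ t ht).2.2⟩
end

section
/- Let n ≥ 1 be an integer, μ₁ > 0, μ₂ > 0, let a, θ₀ ∈ ℝ^n and y ∈ ℝ. Define H : ℝ^n → ℝ by H(θ) = (y − aᵀθ)² + μ₁‖θ − θ₀‖₂² + μ₂‖θ‖₂². Then H has a unique global minimizer, namely θ* = (μ₁/(μ₁+μ₂))·θ₀ + [1/(μ₁ + μ₂ + ‖a‖₂²)]·[y − (μ₁/(μ₁+μ₂))·aᵀθ₀]·a. -/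
open scoped RealInnerProductSpace

/-- Lemma 8 of the paper: the parameter-estimation index
`H(θ) = (y − aᵀθ)² + μ₁‖θ−θ₀‖₂² + μ₂‖θ‖₂²` has the unique global minimizer
`θ* = (μ₁/(μ₁+μ₂))θ₀ + [1/(μ₁+μ₂+‖a‖₂²)]·[y − (μ₁/(μ₁+μ₂))aᵀθ₀]·a`. -/
theorem stmt3 (n : ℕ) (hn : 1 ≤ n) (μ₁ μ₂ : ℝ) (hμ₁ : 0 < μ₁) (hμ₂ : 0 < μ₂)
    (a θ₀ : EuclideanSpace ℝ (Fin n)) (y : ℝ)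
    (H : EuclideanSpace ℝ (Fin n) → ℝ)
    (hH : ∀ θ, H θ = (y - ⟪a, θ⟫) ^ 2 + μ₁ * ‖θ - θ₀‖ ^ 2 + μ₂ * ‖θ‖ ^ 2) :
    ∀ θ : EuclideanSpace ℝ (Fin n),
      θ ≠ (μ₁ / (μ₁ + μ₂)) • θ₀
            + ((μ₁ + μ₂ + ‖a‖ ^ 2)⁻¹ * (y - μ₁ / (μ₁ + μ₂) * ⟪a, θ₀⟫)) • a →
      H ((μ₁ / (μ₁ + μ₂)) • θ₀
            + ((μ₁ + μ₂ + ‖a‖ ^ 2)⁻¹ * (y - μ₁ / (μ₁ + μ₂) * ⟪a, θ₀⟫)) • a) < H θ := by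
  intro θ hθ
  set p : ℝ := μ₁ / (μ₁ + μ₂) with hp
  set q : ℝ := (μ₁ + μ₂ + ‖a‖ ^ 2)⁻¹ * (y - p * ⟪a, θ₀⟫) with hq
  set θs : EuclideanSpace ℝ (Fin n) := p • θ₀ + q • a with hθs
  have hsum : (0:ℝ) < μ₁ + μ₂ := by linarith
  have hden : (0:ℝ) < μ₁ + μ₂ + ‖a‖ ^ 2 := by positivity
  have hkey : (μ₁ + μ₂) • θs + ⟪a, θs⟫ • a = y • a + μ₁ • θ₀ := by
    have hinner : ⟪a, θs⟫ = p * ⟪a, θ₀⟫ + q * ‖a‖ ^ 2 := by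
      rw [hθs, inner_add_right, real_inner_smul_right, real_inner_smul_right,
        real_inner_self_eq_norm_sq]
    have hqden : q * (μ₁ + μ₂ + ‖a‖ ^ 2) = y - p * ⟪a, θ₀⟫ := by
      rw [hq]; field_simp
    have c1 : (μ₁ + μ₂) * p = μ₁ := by rw [hp]; field_simp
    have c2 : (μ₁ + μ₂) * q + (p * ⟪a, θ₀⟫ + q * ‖a‖ ^ 2) = y := by
      linear_combination hqden
    rw [hinner, hθs]
    have expand : (μ₁ + μ₂) • (p • θ₀ + q • a)
        + (p * ⟪a, θ₀⟫ + q * ‖a‖ ^ 2) • a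
        = ((μ₁ + μ₂) * p) • θ₀ + ((μ₁ + μ₂) * q + (p * ⟪a, θ₀⟫ + q * ‖a‖ ^ 2)) • a := by
      module
    rw [expand, c1, c2]
    abel
  have hlin : ∀ d : EuclideanSpace ℝ (Fin n),
      μ₁ * ⟪θs - θ₀, d⟫ + μ₂ * ⟪θs, d⟫ - (y - ⟪a, θs⟫) * ⟪a, d⟫ = 0 := by
    intro d
    have h := congrArg (fun v : EuclideanSpace ℝ (Fin n) => ⟪v, d⟫) hkey
    simp only [inner_add_left, inner_smul_left, real_inner_smul_left,
      RCLike.conj_to_real, conj_trivial] at h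
    rw [inner_sub_left]
    linarith
  set d : EuclideanSpace ℝ (Fin n) := θ - θs with hd
  have hdne : d ≠ 0 := sub_ne_zero.mpr hθ
  have hθeq : θ = θs + d := by rw [hd]; abel
  have hdiff : H θ = H θs + (⟪a, d⟫ ^ 2 + (μ₁ + μ₂) * ‖d‖ ^ 2) := by
    rw [hH, hH, hθeq]
    have e1 : θs + d - θ₀ = (θs - θ₀) + d := by abel
    rw [e1, norm_add_sq_real, norm_add_sq_real, inner_add_right, inner_sub_left]
    have := hlin d
    rw [inner_sub_left] at this
    nlinarith [this]
  have hpos : 0 < ⟪a, d⟫ ^ 2 + (μ₁ + μ₂) * ‖d‖ ^ 2 := by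
    have h1 : 0 < ‖d‖ := norm_pos_iff.mpr hdne
    have h2 : 0 < (μ₁ + μ₂) * ‖d‖ ^ 2 := mul_pos hsum (pow_pos h1 2)
    linarith [sq_nonneg (⟪a, d⟫ : ℝ)]
  rw [hdiff]
  linarith
end

section
/- Let n ≥ 1 be an integer, μ₁ > 0, μ₂ > 0 and C ≥ 0. Let (v_k)_{k≥1} be vectors in ℝ^n and (y_k)_{k≥1} real numbers with |y_k| ≤ C·‖v_k‖₂ for all k ≥ 1, and let (θ̂_k)_{k≥1} in ℝ^n satisfy, for every k ≥ 2, θ̂_k = (μ₁/(μ₁+μ₂))·Q(v_{k−1})·θ̂_{k−1} + y_{k−1}·v_{k−1}/(μ₁ + μ₂ + ‖v_{k−1}‖₂²). Then ‖θ̂_k‖₂ ≤ ‖θ̂_1‖₂ + ((μ₁+μ₂)/μ₂)·C for every k ≥ 1. -/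
open scoped RealInnerProductSpace

/-- `Q(v)x = x − (⟪v,x⟫/(μ₁+μ₂+‖v‖₂²))·v`, i.e. multiplication by the matrix
`Q(v) = I − v vᵀ/(μ₁+μ₂+‖v‖₂²)`. -/
noncomputable def Qmap {n : ℕ} (μ₁ μ₂ : ℝ) (v x : EuclideanSpace ℝ (Fin n)) :
    EuclideanSpace ℝ (Fin n) :=
  x - ((μ₁ + μ₂ + ‖v‖ ^ 2)⁻¹ * ⟪v, x⟫) • v

lemma Qmap_norm_le {n : ℕ} (μ₁ μ₂ : ℝ) (hμ₁ : 0 < μ₁) (hμ₂ : 0 < μ₂)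
    (v x : EuclideanSpace ℝ (Fin n)) : ‖Qmap μ₁ μ₂ v x‖ ≤ ‖x‖ := by
  set s : ℝ := μ₁ + μ₂ + ‖v‖ ^ 2 with hs_def
  have hv : (0:ℝ) ≤ ‖v‖ ^ 2 := sq_nonneg _
  have hs : 0 < s := by positivity
  set a : ℝ := ⟪v, x⟫ with ha
  have key : ‖Qmap μ₁ μ₂ v x‖ ^ 2 ≤ ‖x‖ ^ 2 := by
    have hQ : Qmap μ₁ μ₂ v x = x - (s⁻¹ * a) • v := rfl
    rw [hQ, norm_sub_sq_real, real_inner_smul_right, norm_smul, real_inner_comm]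
    have h1 : ‖s⁻¹ * a‖ ^ 2 * ‖v‖ ^ 2 = (s⁻¹ * a) ^ 2 * ‖v‖ ^ 2 := by
      rw [Real.norm_eq_abs, sq_abs]
    rw [mul_pow, h1]
    have hsi : s⁻¹ * s = 1 := inv_mul_cancel₀ hs.ne'
    nlinarith [sq_nonneg a, sq_nonneg (s⁻¹ * a), mul_pos hs hs,
      sq_nonneg (a * s⁻¹), mul_nonneg (sq_nonneg (s⁻¹ * a)) hv]
  nlinarith [norm_nonneg (Qmap μ₁ μ₂ v x), norm_nonneg x]

/-- The uniform bound (22) from the proof of Theorem 2 of the paper. -/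
theorem stmt7 (n : ℕ) (hn : 1 ≤ n) (μ₁ μ₂ C : ℝ) (hμ₁ : 0 < μ₁) (hμ₂ : 0 < μ₂)
    (hC : 0 ≤ C) (v : ℕ → EuclideanSpace ℝ (Fin n)) (y : ℕ → ℝ)
    (θ : ℕ → EuclideanSpace ℝ (Fin n))
    (hy : ∀ k, 1 ≤ k → |y k| ≤ C * ‖v k‖)
    (hrec : ∀ k, 2 ≤ k →
      θ k = (μ₁ / (μ₁ + μ₂)) • Qmap μ₁ μ₂ (v (k - 1)) (θ (k - 1))
            + (y (k - 1) / (μ₁ + μ₂ + ‖v (k - 1)‖ ^ 2)) • v (k - 1)) :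
    ∀ k, 1 ≤ k → ‖θ k‖ ≤ ‖θ 1‖ + (μ₁ + μ₂) / μ₂ * C := by
  have hμ : 0 < μ₁ + μ₂ := by linarith
  intro k hk
  induction k, hk using Nat.le_induction with
  | base =>
      have : 0 ≤ (μ₁ + μ₂) / μ₂ * C := by positivity
      linarith
  | succ k hk ih =>
      have h2 : 2 ≤ k + 1 := by omega
      have hrec' := hrec (k + 1) h2
      simp only [Nat.add_sub_cancel] at hrec'
      set s : ℝ := μ₁ + μ₂ + ‖v k‖ ^ 2 with hs_def
      have hv : (0:ℝ) ≤ ‖v k‖ ^ 2 := sq_nonneg _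
      have hs : 0 < s := by positivity
      -- bound the second term
      have hterm : ‖(y k / s) • v k‖ ≤ C := by
        rw [norm_smul]
        have : ‖y k / s‖ = |y k| / s := by
          rw [Real.norm_eq_abs, abs_div, abs_of_pos hs]
        rw [this]
        have hyk := hy k hk
        have hnv : (0:ℝ) ≤ ‖v k‖ := norm_nonneg _
        rw [div_mul_eq_mul_div, div_le_iff₀ hs]
        nlinarith
      have hQ : ‖Qmap μ₁ μ₂ (v k) (θ k)‖ ≤ ‖θ k‖ := Qmap_norm_le μ₁ μ₂ hμ₁ hμ₂ _ _
      have hfirst : ‖(μ₁ / (μ₁ + μ₂)) • Qmap μ₁ μ₂ (v k) (θ k)‖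
          ≤ μ₁ / (μ₁ + μ₂) * ‖θ k‖ := by
        rw [norm_smul, Real.norm_eq_abs, abs_of_pos (by positivity)]
        exact mul_le_mul_of_nonneg_left hQ (by positivity)
      have hbound : ‖θ (k + 1)‖ ≤ μ₁ / (μ₁ + μ₂) * ‖θ k‖ + C := by
        rw [hrec']
        calc ‖_ + _‖ ≤ _ + _ := norm_add_le _ _
          _ ≤ μ₁ / (μ₁ + μ₂) * ‖θ k‖ + C := add_le_add hfirst hterm
      have hratio : μ₁ / (μ₁ + μ₂) * (μ₁ + μ₂) = μ₁ := by
        field_simp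
      have hθ1 : (0:ℝ) ≤ ‖θ 1‖ := norm_nonneg _
      have hr1 : μ₁ / (μ₁ + μ₂) ≤ 1 := by
        rw [div_le_one hμ]; linarith
      have hr0 : 0 ≤ μ₁ / (μ₁ + μ₂) := by positivity
      have hCm : μ₁ / (μ₁ + μ₂) * ((μ₁ + μ₂) / μ₂ * C) + C ≤ (μ₁ + μ₂) / μ₂ * C :=
        le_of_eq (by field_simp)
      calc ‖θ (k + 1)‖ ≤ μ₁ / (μ₁ + μ₂) * ‖θ k‖ + C := hbound
        _ ≤ μ₁ / (μ₁ + μ₂) * (‖θ 1‖ + (μ₁ + μ₂) / μ₂ * C) + C :=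
            by nlinarith
        _ ≤ ‖θ 1‖ + (μ₁ + μ₂) / μ₂ * C := by nlinarith
end

section
/- Let d ≥ 1 be an integer, let (P_k)_{k≥1} be d×d real matrices with sup_{k≥1} ‖P_k‖_∞ ≤ M < ∞, let (κ_k)_{k≥1} be vectors in ℝ^d, and let (x_k)_{k≥0} in ℝ^d satisfy x_k = P_k x_{k−1} + κ_k for all k ≥ 1. Suppose there exist constants η ∈ [0,1) and χ ≥ 1 and a strictly increasing sequence of integers ω_0 = 1 < ω_1 < ω_2 < … with ω_{s+1} − ω_s ≤ χ for all s ≥ 0, such that ‖P_{ω_{s+1}−1} P_{ω_{s+1}−2} ⋯ P_{ω_s}‖_∞ ≤ η for every s ≥ 0. Then: (i) if sup_{k≥1} ‖κ_k‖_∞ < ∞ then sup_{k≥0} ‖x_k‖_∞ < ∞; and (ii) if κ_k → 0 as k → ∞ then x_k → 0 as k → ∞. -/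
open Filter

/-- The maximum absolute row sum norm `‖·‖_∞` of a square real matrix. -/
noncomputable def rowSumNorm {d : ℕ} [NeZero d] (A : Matrix (Fin d) (Fin d) ℝ) : ℝ :=
  Finset.univ.sup'
    (Finset.univ_nonempty_iff.mpr ⟨⟨0, Nat.pos_of_ne_zero (NeZero.ne d)⟩⟩)
    fun i => ∑ j, |A i j|

lemma rowSumNorm_nonneg {d : ℕ} [NeZero d] (A : Matrix (Fin d) (Fin d) ℝ) :
    0 ≤ rowSumNorm A := by
  have h := Finset.le_sup' (f := fun i => ∑ j, |A i j|)
    (b := (⟨0, Nat.pos_of_ne_zero (NeZero.ne d)⟩ : Fin d)) (Finset.mem_univ _)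
  refine le_trans ?_ h
  positivity

lemma norm_mulVec_le {d : ℕ} [NeZero d] (A : Matrix (Fin d) (Fin d) ℝ) (v : Fin d → ℝ) :
    ‖A.mulVec v‖ ≤ rowSumNorm A * ‖v‖ := by
  rw [pi_norm_le_iff_of_nonneg (mul_nonneg (rowSumNorm_nonneg A) (norm_nonneg v))]
  intro i
  have h1 : ‖A.mulVec v i‖ ≤ ∑ j, |A i j| * ‖v‖ := by
    simp only [Matrix.mulVec, dotProduct, Real.norm_eq_abs]
    refine (Finset.abs_sum_le_sum_abs _ _).trans (Finset.sum_le_sum fun j _ => ?_)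
    rw [abs_mul]
    exact mul_le_mul_of_nonneg_left (norm_le_pi_norm v j) (abs_nonneg _)
  refine h1.trans ?_
  rw [← Finset.sum_mul]
  exact mul_le_mul_of_nonneg_right
    (Finset.le_sup' (f := fun i => ∑ j, |A i j|) (Finset.mem_univ i)) (norm_nonneg v)

set_option maxHeartbeats 1000000 in
/-- Lemma 10 of the paper: boundedness and convergence of a linear iteration-varying
recursion `x_k = P_k x_{k−1} + κ_k` under a windowed contraction condition. -/
theorem stmt8 (d : ℕ) [NeZero d] (P : ℕ → Matrix (Fin d) (Fin d) ℝ) (M : ℝ)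
    (hM : ∀ k, 1 ≤ k → rowSumNorm (P k) ≤ M)
    (κ : ℕ → Fin d → ℝ) (x : ℕ → Fin d → ℝ)
    (hx : ∀ k, 1 ≤ k → x k = (P k).mulVec (x (k - 1)) + κ k)
    (η : ℝ) (hη0 : 0 ≤ η) (hη1 : η < 1) (χ : ℕ) (hχ : 1 ≤ χ)
    (ω : ℕ → ℕ) (hω0 : ω 0 = 1) (hωmono : StrictMono ω)
    (hωgap : ∀ s, ω (s + 1) - ω s ≤ χ)
    (hcontr : ∀ s, rowSumNorm
      (((List.range (ω (s + 1) - ω s)).map fun j => P (ω (s + 1) - 1 - j)).prod) ≤ η) :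
    ((∃ B, ∀ k, 1 ≤ k → ‖κ k‖ ≤ B) → ∃ B', ∀ k, ‖x k‖ ≤ B') ∧
    (Tendsto κ atTop (nhds 0) → Tendsto x atTop (nhds 0)) := by
  set M' : ℝ := max M 1 with hM'def
  have hM'1 : (1:ℝ) ≤ M' := le_max_right _ _
  have hM'0 : (0:ℝ) ≤ M' := le_trans zero_le_one hM'1
  have hPk : ∀ k, 1 ≤ k → rowSumNorm (P k) ≤ M' := fun k hk => (hM k hk).trans (le_max_left _ _)
  have hω1 : ∀ s, 1 ≤ ω s := fun s => hω0 ▸ hωmono.monotone (Nat.zero_le s)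
  have hMpow1 : ∀ t : ℕ, (1:ℝ) ≤ M' ^ t := fun t => one_le_pow₀ hM'1
  -- one-step bound
  have h1 : ∀ k, 1 ≤ k → ‖x k‖ ≤ M' * ‖x (k - 1)‖ + ‖κ k‖ := by
    intro k hk
    rw [hx k hk]
    refine (norm_add_le _ _).trans (add_le_add ?_ le_rfl)
    exact (norm_mulVec_le _ _).trans
      (mul_le_mul_of_nonneg_right (hPk k hk) (norm_nonneg _))
  -- multi-step bound
  have hstep : ∀ (t m : ℕ) (K : ℝ), 1 ≤ m → 0 ≤ K →
      (∀ j, m ≤ j → j ≤ m - 1 + t → ‖κ j‖ ≤ K) →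
      ‖x (m - 1 + t)‖ ≤ M' ^ t * ‖x (m - 1)‖ + t * M' ^ t * K := by
    intro t
    induction t with
    | zero => intro m K hm hK _; simp
    | succ t ih =>
      intro m K hm hK hκb
      have hprev := ih m K hm hK (fun j hj1 hj2 => hκb j hj1 (by omega))
      have hk1 : (1:ℕ) ≤ m - 1 + (t + 1) := by omega
      have hr := h1 (m - 1 + (t + 1)) hk1
      have heq : m - 1 + (t + 1) - 1 = m - 1 + t := by omega
      rw [heq] at hr
      have hκ' : ‖κ (m - 1 + (t + 1))‖ ≤ K := hκb _ (by omega) le_rfl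
      have h2 : M' * ‖x (m - 1 + t)‖ ≤ M' * (M' ^ t * ‖x (m - 1)‖ + t * M' ^ t * K) :=
        mul_le_mul_of_nonneg_left hprev hM'0
      have h3 : (1:ℝ) ≤ M' ^ (t + 1) := hMpow1 (t + 1)
      have : ‖x (m - 1 + (t + 1))‖ ≤ M' * (M' ^ t * ‖x (m - 1)‖ + t * M' ^ t * K) + K :=
        hr.trans (add_le_add h2 hκ')
      refine this.trans ?_
      push_cast
      have : M' * (M' ^ t * ‖x (m - 1)‖ + ↑t * M' ^ t * K) + K
          = M' ^ (t+1) * ‖x (m - 1)‖ + ↑t * M' ^ (t+1) * K + K := by ring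
      rw [this]
      nlinarith [hK, h3]
  -- window products
  set Q : ℕ → ℕ → Matrix (Fin d) (Fin d) ℝ :=
    fun m t => ((List.range t).map fun j => P (m + t - 1 - j)).prod with hQdef
  have hQsucc : ∀ m t, Q m (t + 1) = P (m + t) * Q m t := by
    intro m t
    simp only [hQdef]
    rw [List.range_succ_eq_map, List.map_cons, List.map_map, List.prod_cons]
    refine congrArg₂ _ rfl (congrArg _ ?_)
    refine List.map_congr_left fun j hj => ?_
    simp only [Function.comp]
    exact congrArg P (by omega)
  -- error from pure product
  have hdiff : ∀ (t m : ℕ) (K : ℝ), 1 ≤ m → 0 ≤ K →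
      (∀ j, m ≤ j → j ≤ m - 1 + t → ‖κ j‖ ≤ K) →
      ‖x (m - 1 + t) - (Q m t).mulVec (x (m - 1))‖ ≤ t * M' ^ t * K := by
    intro t
    induction t with
    | zero => intro m K hm hK _; simp [hQdef, Matrix.one_mulVec]
    | succ t ih =>
      intro m K hm hK hκb
      have hprev := ih m K hm hK (fun j hj1 hj2 => hκb j hj1 (by omega))
      have hk1 : (1:ℕ) ≤ m - 1 + (t + 1) := by omega
      have heq : m - 1 + (t + 1) - 1 = m - 1 + t := by omega
      have heq2 : m - 1 + (t + 1) = m + t := by omega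
      have hxr := hx (m - 1 + (t + 1)) hk1
      rw [heq] at hxr
      have hP : rowSumNorm (P (m + t)) ≤ M' := hPk _ (by omega)
      have hκ' : ‖κ (m - 1 + (t + 1))‖ ≤ K := hκb _ (by omega) le_rfl
      have hsplit : x (m - 1 + (t + 1)) - (Q m (t + 1)).mulVec (x (m - 1))
          = (P (m + t)).mulVec (x (m - 1 + t) - (Q m t).mulVec (x (m - 1)))
            + κ (m - 1 + (t + 1)) := by
        rw [hxr, hQsucc, ← Matrix.mulVec_mulVec, Matrix.mulVec_sub, heq2]
        abel
      rw [hsplit]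
      refine (norm_add_le _ _).trans ?_
      have h2 : ‖(P (m + t)).mulVec (x (m - 1 + t) - (Q m t).mulVec (x (m - 1)))‖
          ≤ M' * (t * M' ^ t * K) := by
        refine (norm_mulVec_le _ _).trans ?_
        exact mul_le_mul hP hprev (norm_nonneg _) hM'0
      refine (add_le_add h2 hκ').trans ?_
      have h3 : (1:ℝ) ≤ M' ^ (t + 1) := hMpow1 (t + 1)
      have hkey : (0:ℝ) ≤ K * (M' ^ (t + 1) - 1) := mul_nonneg hK (by linarith)
      push_cast
      have hident : ((t:ℝ) + 1) * M' ^ (t + 1) * K - (M' * ((t:ℝ) * M' ^ t * K) + K)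
          = K * (M' ^ (t + 1) - 1) := by rw [pow_succ]; ring
      linarith [hkey, hident]
  -- window contraction step
  have hwin : ∀ (s : ℕ) (K : ℝ), 0 ≤ K →
      (∀ j, ω s ≤ j → j < ω (s + 1) → ‖κ j‖ ≤ K) →
      ‖x (ω (s + 1) - 1)‖ ≤ η * ‖x (ω s - 1)‖ + (χ : ℝ) * M' ^ χ * K := by
    intro s K hK hκb
    have hlt : ω s < ω (s + 1) := hωmono (Nat.lt_succ_self s)
    have hm1 : 1 ≤ ω s := hω1 s
    have ht1 : 1 ≤ ω (s + 1) - ω s := by omega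
    have htχ : ω (s + 1) - ω s ≤ χ := hωgap s
    have heq : ω s - 1 + (ω (s + 1) - ω s) = ω (s + 1) - 1 := by omega
    have hd := hdiff (ω (s + 1) - ω s) (ω s) K hm1 hK (fun j hj1 hj2 => hκb j hj1 (by omega))
    rw [heq] at hd
    have hQeq : Q (ω s) (ω (s + 1) - ω s)
        = ((List.range (ω (s+1) - ω s)).map fun j => P (ω (s+1) - 1 - j)).prod := by
      simp only [hQdef]
      refine congrArg _ (List.map_congr_left fun j hj => ?_)
      exact congrArg P (by omega)
    have hQη : rowSumNorm (Q (ω s) (ω (s + 1) - ω s)) ≤ η := by rw [hQeq]; exact hcontr s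
    have hx1 : ‖x (ω (s + 1) - 1)‖
        ≤ ‖(Q (ω s) (ω (s + 1) - ω s)).mulVec (x (ω s - 1))‖
          + ‖x (ω (s+1) - 1) - (Q (ω s) (ω (s + 1) - ω s)).mulVec (x (ω s - 1))‖ := by
      have := norm_add_le ((Q (ω s) (ω (s + 1) - ω s)).mulVec (x (ω s - 1)))
        (x (ω (s+1) - 1) - (Q (ω s) (ω (s + 1) - ω s)).mulVec (x (ω s - 1)))
      simpa using this
    refine hx1.trans (add_le_add ?_ ?_)
    · exact (norm_mulVec_le _ _).trans
        (mul_le_mul_of_nonneg_right hQη (norm_nonneg _))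
    · refine hd.trans ?_
      have htχ' : ((ω (s + 1) - ω s : ℕ):ℝ) ≤ (χ:ℝ) := by exact_mod_cast htχ
      have hp : M' ^ (ω (s + 1) - ω s) ≤ M' ^ χ := pow_le_pow_right₀ hM'1 htχ
      have := mul_le_mul (mul_le_mul htχ' hp
        (le_trans zero_le_one (hMpow1 (ω (s + 1) - ω s))) (by positivity))
        (le_refl K) hK (by positivity)
      linarith [this]
  -- covering
  have hcover : ∀ k, 1 ≤ k → ∃ s, ω s ≤ k ∧ k < ω (s + 1) := by
    intro k hk
    have hs1 : ω (Nat.findGreatest (fun s => ω s ≤ k) k) ≤ k :=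
      Nat.findGreatest_spec (P := fun s => ω s ≤ k) (m := 0) (Nat.zero_le k)
        (by simpa [hω0] using hk)
    refine ⟨Nat.findGreatest (fun s => ω s ≤ k) k, hs1, ?_⟩
    by_cases hc : Nat.findGreatest (fun s => ω s ≤ k) k + 1 ≤ k
    · have := Nat.findGreatest_is_greatest (P := fun s => ω s ≤ k)
        (k := Nat.findGreatest (fun s => ω s ≤ k) k + 1) (by omega) hc
      omega
    · have := hωmono.le_apply (x := Nat.findGreatest (fun s => ω s ≤ k) k + 1)
      omega
  -- bound within a window
  have hkb : ∀ (s k : ℕ) (K A' : ℝ), 0 ≤ K → ω s ≤ k → k < ω (s + 1) →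
      ‖x (ω s - 1)‖ ≤ A' → (∀ j, ω s ≤ j → j ≤ k → ‖κ j‖ ≤ K) →
      ‖x k‖ ≤ M' ^ χ * A' + (χ:ℝ) * M' ^ χ * K := by
    intro s k K A' hK hsk hks hA' hκb
    have hm1 : 1 ≤ ω s := hω1 s
    have heq : ω s - 1 + (k + 1 - ω s) = k := by omega
    have htχ : k + 1 - ω s ≤ χ := by have := hωgap s; omega
    have hst := hstep (k + 1 - ω s) (ω s) K hm1 hK (fun j hj1 hj2 => hκb j hj1 (by omega))
    rw [heq] at hst
    refine hst.trans ?_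
    have hp : M' ^ (k + 1 - ω s) ≤ M' ^ χ := pow_le_pow_right₀ hM'1 htχ
    have hA'0 : 0 ≤ A' := le_trans (norm_nonneg _) hA'
    have h1' : M' ^ (k + 1 - ω s) * ‖x (ω s - 1)‖ ≤ M' ^ χ * A' :=
      mul_le_mul hp hA' (norm_nonneg _) (by positivity)
    have htχ' : ((k + 1 - ω s : ℕ):ℝ) ≤ (χ:ℝ) := by exact_mod_cast htχ
    have h2' : ((k + 1 - ω s : ℕ):ℝ) * M' ^ (k + 1 - ω s) * K ≤ (χ:ℝ) * M' ^ χ * K :=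
      mul_le_mul (mul_le_mul htχ' hp (by positivity) (by positivity)) le_rfl hK (by positivity)
    linarith
  -- bounded window sequence given a κ bound
  have hwinbdd : ∀ B : ℝ, 0 ≤ B → (∀ k, 1 ≤ k → ‖κ k‖ ≤ B) →
      ∀ s, ‖x (ω s - 1)‖ ≤ max ‖x 0‖ ((χ:ℝ) * M' ^ χ * B / (1 - η)) := by
    intro B hB hκB
    set R : ℝ := max ‖x 0‖ ((χ:ℝ) * M' ^ χ * B / (1 - η)) with hRdef
    have h1η : (0:ℝ) < 1 - η := by linarith
    have hR2 : (χ:ℝ) * M' ^ χ * B ≤ (1 - η) * R := by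
      have : (χ:ℝ) * M' ^ χ * B / (1 - η) ≤ R := le_max_right _ _
      calc (χ:ℝ) * M' ^ χ * B = (1 - η) * ((χ:ℝ) * M' ^ χ * B / (1 - η)) := by
            field_simp
        _ ≤ (1 - η) * R := mul_le_mul_of_nonneg_left this h1η.le
    intro s
    induction s with
    | zero =>
      have h00 : ω 0 - 1 = 0 := by omega
      rw [h00]
      exact le_max_left _ _
    | succ s ih =>
      have := hwin s B hB (fun j hj1 _ => hκB j (le_trans (hω1 s) hj1))
      refine this.trans ?_
      have : η * ‖x (ω s - 1)‖ ≤ η * R := mul_le_mul_of_nonneg_left ih hη0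
      linarith
  constructor
  · -- boundedness
    rintro ⟨B₀, hB₀⟩
    set B : ℝ := max B₀ 0 with hBdef
    have hB : 0 ≤ B := le_max_right _ _
    have hκB : ∀ k, 1 ≤ k → ‖κ k‖ ≤ B := fun k hk => (hB₀ k hk).trans (le_max_left _ _)
    set R : ℝ := max ‖x 0‖ ((χ:ℝ) * M' ^ χ * B / (1 - η)) with hRdef
    have hRw := hwinbdd B hB hκB
    refine ⟨max ‖x 0‖ (M' ^ χ * R + (χ:ℝ) * M' ^ χ * B), fun k => ?_⟩
    rcases Nat.eq_zero_or_pos k with hk | hk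
    · rw [hk]; exact le_max_left _ _
    · obtain ⟨s, hs1, hs2⟩ := hcover k hk
      refine le_trans (hkb s k B R hB hs1 hs2 (hRw s)
        (fun j hj1 _ => hκB j (le_trans (hω1 s) hj1))) (le_max_right _ _)
  · -- convergence
    intro hκ
    have hκn : Tendsto (fun k => ‖κ k‖) atTop (nhds 0) := by
      simpa using hκ.norm
    obtain ⟨B₀, hB₀⟩ := hκn.bddAbove_range
    simp only [upperBounds, Set.mem_range, Set.mem_setOf_eq] at hB₀
    set B : ℝ := max B₀ 0 with hBdef
    have hB : 0 ≤ B := le_max_right _ _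
    have hκB : ∀ k, 1 ≤ k → ‖κ k‖ ≤ B :=
      fun k _ => le_trans (hB₀ ⟨k, rfl⟩) (le_max_left _ _)
    set R : ℝ := max ‖x 0‖ ((χ:ℝ) * M' ^ χ * B / (1 - η)) with hRdef
    have hR0 : 0 ≤ R := le_trans (norm_nonneg _) (le_max_left _ _)
    have hRw := hwinbdd B hB hκB
    have h1η : (0:ℝ) < 1 - η := by linarith
    set C : ℝ := (χ:ℝ) * M' ^ χ with hCdef
    have hC1 : (1:ℝ) ≤ C := by
      have : (1:ℝ) ≤ (χ:ℝ) := by exact_mod_cast hχ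
      nlinarith [hMpow1 χ]
    have hC0 : (0:ℝ) < C := lt_of_lt_of_le zero_lt_one hC1
    have hMχ0 : (0:ℝ) < M' ^ χ := lt_of_lt_of_le zero_lt_one (hMpow1 χ)
    rw [NormedAddCommGroup.tendsto_nhds_zero]
    intro ε hε
    -- choose δ
    set δ : ℝ := ε * (1 - η) / (4 * M' ^ χ * C) with hδdef
    have hδ0 : 0 < δ := by positivity
    have hne1 : (1 - η) ≠ 0 := ne_of_gt h1η
    have hne2 : M' ^ χ ≠ 0 := ne_of_gt hMχ0
    have hne3 : C ≠ 0 := ne_of_gt hC0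
    have hδ1 : M' ^ χ * (C * δ / (1 - η)) ≤ ε / 4 := by
      have : M' ^ χ * (C * δ / (1 - η)) = ε / 4 := by
        rw [hδdef]; field_simp
      linarith
    have hδ2 : C * δ ≤ ε / 4 := by
      have he : C * δ = ε * (1 - η) / (4 * M' ^ χ) := by
        rw [hδdef]; field_simp
      rw [he, div_le_div_iff₀ (by positivity) (by norm_num)]
      nlinarith [hMpow1 χ, hη0, hε.le]
    -- N₁ from tendsto
    have hev := (NormedAddCommGroup.tendsto_nhds_zero.mp hκ) δ hδ0
    obtain ⟨N₁, hN₁⟩ := eventually_atTop.mp hev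
    set S : ℕ := N₁ with hSdef
    have hκδ : ∀ j, ω S ≤ j → ‖κ j‖ ≤ δ := by
      intro j hj
      exact (hN₁ j (le_trans (le_trans hωmono.le_apply hj) le_rfl)).le
    -- decay of window sequence after S
    have hdecay : ∀ t : ℕ, ‖x (ω (S + t) - 1)‖ ≤ η ^ t * R + C * δ / (1 - η) := by
      intro t
      induction t with
      | zero =>
        simp only [pow_zero, one_mul, Nat.add_zero]
        have : 0 ≤ C * δ / (1 - η) := by positivity
        linarith [hRw S]
      | succ t ih =>
        have hstep' := hwin (S + t) δ hδ0.le
          (fun j hj1 _ => hκδ j (le_trans (hωmono.monotone (Nat.le_add_right S t)) hj1))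
        rw [show S + t + 1 = S + (t + 1) by ring] at hstep'
        refine hstep'.trans ?_
        have h2 : η * ‖x (ω (S + t) - 1)‖ ≤ η * (η ^ t * R + C * δ / (1 - η)) :=
          mul_le_mul_of_nonneg_left ih hη0
        have h3 : η * (η ^ t * R + C * δ / (1 - η)) + C * δ
            = η ^ (t + 1) * R + (η * (C * δ / (1 - η)) + C * δ) := by ring
        have h4 : η * (C * δ / (1 - η)) + C * δ = C * δ / (1 - η) := by
          field_simp
          ring
        rw [h4] at h3
        linarith
    -- choose T
    obtain ⟨T, hT⟩ := exists_pow_lt_of_lt_one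
      (show (0:ℝ) < ε / (4 * M' ^ χ * (R + 1)) by positivity) hη1
    have hTR : M' ^ χ * (η ^ T * R) ≤ ε / 4 := by
      have hη' : η ^ T * R ≤ η ^ T * (R + 1) :=
        mul_le_mul_of_nonneg_left (by linarith) (pow_nonneg hη0 T)
      have : η ^ T * (R + 1) ≤ ε / (4 * M' ^ χ * (R + 1)) * (R + 1) :=
        mul_le_mul_of_nonneg_right hT.le (by linarith)
      have heq : ε / (4 * M' ^ χ * (R + 1)) * (R + 1) = ε / (4 * M' ^ χ) := by
        field_simp
      rw [heq] at this
      calc M' ^ χ * (η ^ T * R) ≤ M' ^ χ * (ε / (4 * M' ^ χ)) := by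
            exact mul_le_mul_of_nonneg_left (le_trans hη' this) hMχ0.le
        _ = ε / 4 := by field_simp
    refine eventually_atTop.mpr ⟨ω (S + T), fun k hk => ?_⟩
    have hk1 : 1 ≤ k := le_trans (hω1 (S + T)) hk
    obtain ⟨s, hs1, hs2⟩ := hcover k hk1
    have hsT : S + T ≤ s := by
      by_contra hc
      push_neg at hc
      have : ω (S + T) < ω (s + 1) := lt_of_le_of_lt hk hs2
      have := hωmono.lt_iff_lt.mp this
      omega
    -- bound on x (ω s - 1)
    have has : ‖x (ω s - 1)‖ ≤ η ^ T * R + C * δ / (1 - η) := by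
      have := hdecay (s - S)
      rw [show S + (s - S) = s by omega] at this
      refine this.trans ?_
      have hTs : T ≤ s - S := by omega
      have : η ^ (s - S) ≤ η ^ T := pow_le_pow_of_le_one hη0 hη1.le hTs
      nlinarith [hR0]
    have hxk := hkb s k δ (η ^ T * R + C * δ / (1 - η)) hδ0.le hs1 hs2 has
      (fun j hj1 _ => hκδ j (le_trans (hωmono.monotone (by omega : S ≤ s)) hj1))
    have hfin : M' ^ χ * (η ^ T * R + C * δ / (1 - η)) + (χ:ℝ) * M' ^ χ * δ
        ≤ ε / 4 + ε / 4 + ε / 4 := by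
      have e1 : M' ^ χ * (η ^ T * R + C * δ / (1 - η))
          = M' ^ χ * (η ^ T * R) + M' ^ χ * (C * δ / (1 - η)) := by ring
      rw [e1]
      have : (χ:ℝ) * M' ^ χ * δ = C * δ := by rw [hCdef]
      rw [this]
      linarith
    have := hxk.trans hfin
    linarith
end

section
/- Let m ≥ 2 be an integer, ζ ∈ [0,1), and let real numbers p_{i,k} for i ∈ {1,…,m−1} and k ≥ 1 satisfy Σ_{i=1}^{m−1} |p_{i,k}| ≤ ζ for every k ≥ 1. Let (κ_k)_{k≥1} be real numbers and let (e_k)_{k ≥ 2−m} be real numbers satisfying e_k = Σ_{i=1}^{m−1} p_{i,k}·e_{k−i} + κ_k for every k ≥ 1. Then: (i) if sup_{k≥1} |κ_k| < ∞ then sup_k |e_k| < ∞; and (ii) if κ_k → 0 as k → ∞ then e_k → 0 as k → ∞. -/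
/-!
Taking absolute values in the recursion gives `|e_k| ≤ ζ · max_{1 ≤ i < m} |e_{k-i}| + |κ_k|`.
If `|κ_k| ≤ B`, then `C = max(max of the initial values, B / (1 - ζ))` satisfies `ζ C + B ≤ C`,
so `|e_k| ≤ C` propagates by induction. If moreover `κ_k → 0`, the bound passes to
`L = limsup |e_k|` as `L ≤ ζ L`, which forces `L = 0`.
-/

open Filter

/-- `a k ≤ ζ · max_{1 ≤ i ≤ r} a (k - i) + b k` for `k ≥ 1`, phrased without the maximum. -/
def WindowContraction (ζ : ℝ) (r : ℕ) (a : ℤ → ℝ) (b : ℕ → ℝ) : Prop :=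
  ∀ k : ℕ, 1 ≤ k → ∀ D : ℝ, (∀ i ∈ Finset.Icc 1 r, a ((k : ℤ) - (i : ℤ)) ≤ D) → a k ≤ ζ * D + b k

theorem windowContraction_abs_of_recursion {r : ℕ} (hr : 1 ≤ r) {ζ : ℝ} {p : ℕ → ℕ → ℝ}
    (hp : ∀ k : ℕ, 1 ≤ k → ∑ i ∈ Finset.Icc 1 r, |p i k| ≤ ζ) {κ : ℕ → ℝ} {e : ℤ → ℝ}
    (hrec : ∀ k : ℕ, 1 ≤ k →
      e k = ∑ i ∈ Finset.Icc 1 r, p i k * e ((k : ℤ) - (i : ℤ)) + κ k) :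
    WindowContraction ζ r (fun k => |e k|) (fun k => |κ k|) := by
  intro k hk D hD
  dsimp only at hD ⊢
  have hD0 : 0 ≤ D := (abs_nonneg _).trans (hD 1 (Finset.mem_Icc.2 ⟨le_rfl, hr⟩))
  rw [hrec k hk]
  calc |∑ i ∈ Finset.Icc 1 r, p i k * e ((k : ℤ) - (i : ℤ)) + κ k|
      ≤ ∑ i ∈ Finset.Icc 1 r, |p i k| * |e ((k : ℤ) - (i : ℤ))| + |κ k| := by
        grw [abs_add_le, Finset.abs_sum_le_sum_abs]
        simp only [abs_mul, le_refl]
    _ ≤ (∑ i ∈ Finset.Icc 1 r, |p i k|) * D + |κ k| := by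
        rw [Finset.sum_mul]
        gcongr with i hi
        exact hD i hi
    _ ≤ ζ * D + |κ k| := by gcongr; exact hp k hk

namespace WindowContraction

variable {ζ : ℝ} {r : ℕ} {a : ℤ → ℝ} {b : ℕ → ℝ}

theorem le_of_le_initial (h : WindowContraction ζ r a b) {B C : ℝ} (hb : ∀ k, 1 ≤ k → b k ≤ B)
    (hBC : B ≤ (1 - ζ) * C) (hinit : ∀ j : ℤ, 1 - r ≤ j → j ≤ 0 → a j ≤ C) :
    ∀ k : ℤ, 1 - r ≤ k → a k ≤ C := by
  suffices hnat : ∀ n : ℕ, 1 - (r : ℤ) ≤ n → a n ≤ C by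
    intro k hk
    rcases le_or_gt k 0 with hk0 | hk0
    · exact hinit k hk hk0
    · lift k to ℕ using hk0.le
      exact hnat k hk
  intro n
  induction n using Nat.strong_induction_on with
  | _ n ih =>
    intro hrn
    rcases Nat.eq_zero_or_pos n with rfl | hn
    · exact hinit 0 hrn le_rfl
    have hwindow : ∀ i ∈ Finset.Icc 1 r, a ((n : ℤ) - (i : ℤ)) ≤ C := by
      intro i hi
      rw [Finset.mem_Icc] at hi
      rcases le_or_gt (n : ℤ) i with hni | hni
      · exact hinit _ (by omega) (by omega)
      · have hcast : (n : ℤ) - (i : ℤ) = ((n - i : ℕ) : ℤ) := by omega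
        rw [hcast]
        exact ih _ (by omega) (by omega)
    linarith [h n hn C hwindow, hb n hn]

theorem exists_bound (h : WindowContraction ζ r a b) (hζ : ζ < 1) {B : ℝ}
    (hb : ∀ k, 1 ≤ k → b k ≤ B) : ∃ C, ∀ k : ℤ, 1 - r ≤ k → a k ≤ C := by
  obtain ⟨C₀, hC₀⟩ := ((Set.finite_Icc (1 - (r : ℤ)) 0).image a).bddAbove
  refine ⟨max C₀ (B / (1 - ζ)), h.le_of_le_initial hb ?_ fun j hj₁ hj₂ => ?_⟩
  · exact (div_le_iff₀' (sub_pos.2 hζ)).1 (le_max_right _ _)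
  · exact (hC₀ ⟨j, ⟨hj₁, hj₂⟩, rfl⟩).trans (le_max_left _ _)

theorem eventually_le_mul_add (h : WindowContraction ζ r a b) (hb : Tendsto b atTop (nhds 0))
    {D : ℝ} (hD : ∀ᶠ k : ℕ in atTop, a k ≤ D) {ε : ℝ} (hε : 0 < ε) :
    ∀ᶠ k : ℕ in atTop, a k ≤ ζ * D + ε := by
  obtain ⟨N, hN⟩ := eventually_atTop.1 hD
  filter_upwards [eventually_ge_atTop (N + r + 1), hb.eventually (ge_mem_nhds hε)]
    with k hk hbk
  have hwindow : ∀ i ∈ Finset.Icc 1 r, a ((k : ℤ) - (i : ℤ)) ≤ D := by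
    intro i hi
    rw [Finset.mem_Icc] at hi
    have hcast : (k : ℤ) - (i : ℤ) = ((k - i : ℕ) : ℤ) := by omega
    rw [hcast]
    exact hN _ (by omega)
  linarith [h k (by omega) D hwindow]

theorem tendsto_zero (h : WindowContraction ζ r a b) (hζ : ζ < 1) (ha : ∀ k, 0 ≤ a k)
    {C : ℝ} (hC : ∀ᶠ k : ℕ in atTop, a k ≤ C) (hb : Tendsto b atTop (nhds 0)) :
    Tendsto (fun k : ℕ => a k) atTop (nhds 0) := by
  set L := limsup (fun k : ℕ => a k) atTop
  have hbdd : IsBoundedUnder (· ≤ ·) atTop (fun k : ℕ => a k) :=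
    isBoundedUnder_of_eventually_le hC
  have hcobdd : IsCoboundedUnder (· ≤ ·) atTop (fun k : ℕ => a k) :=
    isCoboundedUnder_le_of_le atTop fun k => ha k
  have hL : L ≤ ζ * L := by
    refine le_of_forall_pos_le_add fun δ hδ => ?_
    have hε : 0 < δ / 2 := half_pos hδ
    have hnear : ∀ᶠ k : ℕ in atTop, a k ≤ L + δ / 2 :=
      (eventually_lt_of_limsup_lt (by linarith) hbdd).mono fun _ => le_of_lt
    have hLle : L ≤ ζ * (L + δ / 2) + δ / 2 :=
      limsup_le_of_le hcobdd (h.eventually_le_mul_add hb hnear hε)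
    nlinarith
  have hL0 : L ≤ 0 := by nlinarith
  exact tendsto_order.2 ⟨fun c hc => Eventually.of_forall fun k => hc.trans_le (ha k),
    fun c hc => eventually_lt_of_limsup_lt (hL0.trans_lt hc) hbdd⟩

end WindowContraction

theorem stmt9_general (m : ℕ) (hm : 2 ≤ m) (ζ : ℝ) (hζ1 : ζ < 1)
    (p : ℕ → ℕ → ℝ)
    (hp : ∀ k : ℕ, 1 ≤ k → ∑ i ∈ Finset.Icc 1 (m - 1), |p i k| ≤ ζ)
    (κ : ℕ → ℝ) (e : ℤ → ℝ)
    (hrec : ∀ k : ℕ, 1 ≤ k →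
      e k = ∑ i ∈ Finset.Icc 1 (m - 1), p i k * e ((k : ℤ) - (i : ℤ)) + κ k) :
    ((∃ B, ∀ k, 1 ≤ k → |κ k| ≤ B) →
      ∃ B', ∀ k : ℤ, 2 - (m : ℤ) ≤ k → |e k| ≤ B') ∧
    (Tendsto κ atTop (nhds 0) → Tendsto (fun k : ℕ => e (k : ℤ)) atTop (nhds 0)) := by
  have hwin := windowContraction_abs_of_recursion (by omega) hp hrec
  have hstart : 1 - ((m - 1 : ℕ) : ℤ) = 2 - m := by omega
  have hbounded : ∀ B, (∀ k, 1 ≤ k → |κ k| ≤ B) → ∃ B', ∀ k : ℤ, 2 - (m : ℤ) ≤ k → |e k| ≤ B' := by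
    intro B hB
    simpa only [hstart] using hwin.exists_bound hζ1 hB
  refine ⟨fun ⟨B, hB⟩ => hbounded B hB, fun hκ => ?_⟩
  have hκabs := (tendsto_zero_iff_abs_tendsto_zero κ).1 hκ
  obtain ⟨B, hB⟩ := hκabs.bddAbove_range
  obtain ⟨C, hC⟩ := hbounded B fun k _ => hB ⟨k, rfl⟩
  exact (tendsto_zero_iff_abs_tendsto_zero _).2 <| hwin.tendsto_zero hζ1 (fun _ => abs_nonneg _)
    (Eventually.of_forall fun k => hC k (by omega)) hκabs

/-- Lemma 4 of the paper: boundedness and convergence of the higher-order scalar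
tracking-error recursion `e_k = Σ_{i=1}^{m−1} p_{i,k} e_{k−i} + κ_k` when
`Σ_{i=1}^{m−1} |p_{i,k}| ≤ ζ < 1`. -/
theorem stmt9 (m : ℕ) (hm : 2 ≤ m) (ζ : ℝ) (hζ0 : 0 ≤ ζ) (hζ1 : ζ < 1)
    (p : ℕ → ℕ → ℝ)
    (hp : ∀ k : ℕ, 1 ≤ k → ∑ i ∈ Finset.Icc 1 (m - 1), |p i k| ≤ ζ)
    (κ : ℕ → ℝ) (e : ℤ → ℝ)
    (hrec : ∀ k : ℕ, 1 ≤ k →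
      e k = ∑ i ∈ Finset.Icc 1 (m - 1), p i k * e ((k : ℤ) - (i : ℤ)) + κ k) :
    ((∃ B, ∀ k, 1 ≤ k → |κ k| ≤ B) →
      ∃ B', ∀ k : ℤ, 2 - (m : ℤ) ≤ k → |e k| ≤ B') ∧
    (Tendsto κ atTop (nhds 0) → Tendsto (fun k : ℕ => e (k : ℤ)) atTop (nhds 0)) :=
  stmt9_general m hm ζ hζ1 p hp κ e hrec
end

section
/- Let m ≥ 2 be an integer and ζ ∈ [0,1). For each k ≥ 1 let p_{1,k},…,p_{m−1,k} be real numbers with Σ_{j=1}^{m−1} |p_{j,k}| ≤ ζ, and set P_k = P(p_{1,k},…,p_{m−1,k}). Then for every integer a ≥ 0, the product of any m−1 consecutive such matrices satisfies ‖P_{a+m−1} P_{a+m−2} ⋯ P_{a+1}‖_∞ ≤ ζ. -/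
/-- The `(m−1)×(m−1)` companion-type matrix whose first row is `p` and whose
`(j+1, j)` entries are `1`, all other entries being `0`. -/
def PMat {d : ℕ} (p : Fin d → ℝ) : Matrix (Fin d) (Fin d) ℝ :=
  fun i j => if (i : ℕ) = 0 then p j else if (i : ℕ) = (j : ℕ) + 1 then 1 else 0

/-!
Left multiplication by `PMat q` replaces row `0` by the combination `q ᵥ* B` of the rows of
`B` and shifts every other row down by one. Hence if every `‖qₖ‖₁ ≤ ζ ≤ 1`, all rows of a
product of `n` such matrices have absolute sum at most `1`, and an induction on `n` shows that
the first `n` rows have absolute sum at most `ζ`: row `0` is a `ζ`-weighted combination of rows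
of sum at most `1`, and row `i > 0` is row `i - 1` of the shorter product.
-/

open Matrix

lemma sum_abs_vecMul_le {ι κ : Type*} [Fintype ι] [Fintype κ] (q : ι → ℝ)
    (B : Matrix ι κ ℝ) : ∑ j, |(q ᵥ* B) j| ≤ ∑ l, |q l| * ∑ j, |B l j| := by
  calc ∑ j, |(q ᵥ* B) j| ≤ ∑ j, ∑ l, |q l * B l j| :=
        Finset.sum_le_sum fun j _ => Finset.abs_sum_le_sum_abs _ _
    _ = ∑ l, |q l| * ∑ j, |B l j| := by
        rw [Finset.sum_comm]
        simp only [abs_mul, Finset.mul_sum]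

section PMat

variable {d : ℕ} {κ : Type*} (q : Fin d → ℝ) (B : Matrix (Fin d) κ ℝ)

lemma PMat_mul_row_of_eq_zero {i : Fin d} (hi : (i : ℕ) = 0) : (PMat q * B) i = q ᵥ* B := by
  ext j
  simp [mul_apply, vecMul, dotProduct, PMat, hi]

lemma PMat_mul_row_of_ne_zero {i : Fin d} (hi : (i : ℕ) ≠ 0) :
    (PMat q * B) i = B ⟨i - 1, by omega⟩ := by
  ext j
  rw [mul_apply, Finset.sum_eq_single ⟨i - 1, by omega⟩]
  · simp only [PMat, if_neg hi]
    rw [if_pos (by omega), one_mul]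
  · intro l _ hl
    have : (i : ℕ) ≠ l + 1 := fun h => hl (Fin.ext (by simp; omega))
    simp [PMat, hi, this]
  · simp

end PMat

lemma sum_abs_prod_PMat_le {d : ℕ} {ζ : ℝ} (hζ : ζ ≤ 1) (L : List (Fin d → ℝ))
    (hL : ∀ q ∈ L, ∑ j, |q j| ≤ ζ) (i : Fin d) :
    ∑ j, |(L.map PMat).prod i j| ≤ if (i : ℕ) < L.length then ζ else 1 := by
  induction L generalizing i with
  | nil => simp [one_apply, apply_ite abs, Finset.sum_ite_eq]
  | cons q L ih =>
    have ih := ih fun q' hq' => hL q' (List.mem_cons_of_mem _ hq')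
    rw [List.map_cons, List.prod_cons]
    by_cases hi : (i : ℕ) = 0
    · have hrow (l : Fin d) : ∑ j, |(L.map PMat).prod l j| ≤ 1 :=
        (ih l).trans (by split_ifs <;> simp [hζ])
      calc ∑ j, |(PMat q * (L.map PMat).prod) i j|
          ≤ ∑ l, |q l| * ∑ j, |(L.map PMat).prod l j| := by
            rw [PMat_mul_row_of_eq_zero _ _ hi]
            exact sum_abs_vecMul_le _ _
        _ ≤ ∑ l, |q l| := Finset.sum_le_sum fun l _ =>
            mul_le_of_le_one_right (abs_nonneg _) (hrow l)
        _ ≤ ζ := hL q List.mem_cons_self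
        _ = _ := by simp [hi]
    · rw [PMat_mul_row_of_ne_zero _ _ hi]
      convert ih ⟨i - 1, by omega⟩ using 2
      simp only [List.length_cons]
      omega

/-- Lemma 5 of the paper: the product of `m−1` consecutive companion-type matrices
with row sums at most `ζ < 1` has maximum row sum norm at most `ζ`. -/
theorem stmt10 (m : ℕ) (hm : 2 ≤ m) (ζ : ℝ) (hζ1 : ζ < 1)
    (p : ℕ → Fin (m - 1) → ℝ)
    (hp : ∀ k, 1 ≤ k → ∑ j, |p k j| ≤ ζ) :
    ∀ a : ℕ,
      @rowSumNorm (m - 1) ⟨by omega⟩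
          (((List.range (m - 1)).map fun j => PMat (p (a + m - 1 - j))).prod) ≤ ζ := by
  intro a
  have hL : ∀ q ∈ (List.range (m - 1)).map (fun j => p (a + m - 1 - j)), ∑ j, |q j| ≤ ζ := by
    simp only [List.mem_map, List.mem_range]
    rintro q ⟨j, hj, rfl⟩
    exact hp _ (by omega)
  refine Finset.sup'_le _ _ fun i _ => ?_
  have := sum_abs_prod_PMat_le hζ1.le _ hL i
  rwa [List.map_map, List.length_map, List.length_range, if_pos i.isLt] at this
end

section
/- Let m ≥ 2 be an integer and ζ ∈ [0,1). For each k ≥ 1 let p_{1,k},…,p_{m−1,k} be real numbers with Σ_{j=1}^{m−1} |p_{j,k}| ≤ ζ, and set N_k = P(|p_{1,k}|,…,|p_{m−1,k}|) (a nonnegative matrix). Then for every integer a ≥ 0 and every i ∈ {1,…,m−1}, the vector N_{a+i} N_{a+i−1} ⋯ N_{a+1}·𝟙 (where 𝟙 ∈ ℝ^{m−1} is the all-ones vector) is entrywise at most the vector whose first i entries equal ζ and whose remaining m−1−i entries equal 1. -/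
lemma pmat_mulVec {d : ℕ} (q v : Fin d → ℝ) (j : Fin d) :
    (PMat q).mulVec v j =
      if h : (j : ℕ) = 0 then ∑ j', q j' * v j'
      else v ⟨(j : ℕ) - 1, by have := j.isLt; omega⟩ := by
  simp only [Matrix.mulVec, dotProduct, PMat]
  split_ifs with h
  · simp [h]
  · rw [Finset.sum_eq_single (⟨(j : ℕ) - 1, by have := j.isLt; omega⟩ : Fin d)]
    · rw [if_pos (by simp; omega), one_mul]
    · intro b _ hb
      rw [if_neg, zero_mul]
      intro hjb
      apply hb
      apply Fin.ext
      simp only []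
      omega
    · intro hnot
      exact absurd (Finset.mem_univ _) hnot

/-- The inductive claim (32)/(24) of Appendix E of the paper: the product of `i`
consecutive nonnegative companion-type matrices applied to the all-ones vector is
entrywise at most the vector whose first `i` entries are `ζ` and the rest are `1`. -/
theorem stmt11 (m : ℕ) (hm : 2 ≤ m) (ζ : ℝ) (hζ0 : 0 ≤ ζ) (hζ1 : ζ < 1)
    (p : ℕ → Fin (m - 1) → ℝ)
    (hp : ∀ k, 1 ≤ k → ∑ j, |p k j| ≤ ζ) :
    ∀ a : ℕ, ∀ i : ℕ, 1 ≤ i → i ≤ m - 1 → ∀ j : Fin (m - 1),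
      (((List.range i).map fun s => PMat fun j' => |p (a + i - s) j'|).prod).mulVec
          (fun _ => (1 : ℝ)) j
        ≤ if (j : ℕ) < i then ζ else 1 := by
  intro a i
  induction i with
  | zero => intro h1; exact absurd h1 (by omega)
  | succ n ih =>
    intro _ hle j
    rw [List.range_succ_eq_map, List.map_cons, List.map_map, List.prod_cons,
      ← Matrix.mulVec_mulVec]
    have hfun : ((fun s => PMat fun j' => |p (a + (n + 1) - s) j'|) ∘ Nat.succ)
        = fun s => PMat fun j' => |p (a + n - s) j'| := by
      funext s
      simp only [Function.comp]
      have : a + (n + 1) - Nat.succ s = a + n - s := by omega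
      rw [this]
    rw [hfun]
    set w := (((List.range n).map fun s => PMat fun j' => |p (a + n - s) j'|).prod).mulVec
      (fun _ => (1 : ℝ)) with hw
    have hw1 : ∀ j' : Fin (m - 1), w j' ≤ 1 := by
      intro j'
      rcases Nat.eq_zero_or_pos n with hn | hn
      · subst hn
        simp [hw, Matrix.mulVec]
      · refine le_trans (ih hn (by omega) j') ?_
        split_ifs
        · exact le_of_lt hζ1
        · exact le_refl 1
    have hwζ : ∀ j' : Fin (m - 1), (j' : ℕ) < n → w j' ≤ ζ := by
      intro j' hj'
      have hn : 1 ≤ n := by omega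
      have := ih hn (by omega) j'
      rwa [if_pos hj'] at this
    rw [pmat_mulVec]
    split_ifs with h h2 h2
    · -- j = 0, goal ≤ ζ
      calc ∑ j', |p (a + (n + 1) - 0) j'| * w j'
          ≤ ∑ j', |p (a + (n + 1) - 0) j'| := by
            apply Finset.sum_le_sum
            intro b _
            exact mul_le_of_le_one_right (abs_nonneg _) (hw1 b)
        _ ≤ ζ := hp _ (by omega)
    · exact absurd h2 (by omega)
    · -- j ≥ 1, j < n+1
      apply hwζ
      simp only []
      have := j.isLt
      omega
    · exact hw1 _
end

section
/- Let m ≥ 2 be an integer and let λ, γ₁,…,γ_m, βmin, βmax, ε, β̂ be positive reals with βmin ≤ βmax, ε ≤ β̂, γ₁ + γ₂ > Σ_{i=3}^{m} γᵢ, and λ > (γ₁² + γ₁γ₂)·βmax·β̂. Then for all θ ∈ [βmin, βmax] and all θ̂ ∈ [ε, β̂]: |1 − (γ₁² + γ₁γ₂)·θ·θ̂/(λ + γ₁² θ̂²)| + Σ_{i=3}^{m} γ₁γᵢ·θ·θ̂/(λ + γ₁² θ̂²) ≤ 1 − γ₁·(γ₁ + γ₂ − Σ_{i=3}^{m} γᵢ)·βmin·ε/(λ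 + γ₁² β̂²) < 1. -/
/-! Condition (19) forces `(γ₁² + γ₁γ₂) θ θ̂ ≤ λ`, so the term inside the absolute value is
nonnegative and the left-hand side collapses to `1 - γ₁ (γ₁ + γ₂ - Σ γᵢ) θ θ̂ / (λ + γ₁² θ̂²)`.
This is largest when `θ, θ̂` are smallest in the numerator and `θ̂` is largest in the
denominator. -/

lemma abs_one_sub_div_add_div {a b d : ℝ} (ha : 0 ≤ a) (had : a ≤ d) :
    |1 - a / d| + b / d = 1 - (a - b) / d := by
  rw [abs_of_nonneg (sub_nonneg.2 (div_le_one_of_le₀ had (ha.trans had))), sub_div]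
  ring

theorem stmt13_general (m : ℕ) (hm : 2 ≤ m) (lam βmin βmax ε βh : ℝ) (γ : ℕ → ℝ)
    (hγpos : ∀ i ∈ Finset.Icc 1 m, 0 < γ i)
    (hβmin : 0 < βmin)
    (hε : 0 < ε)
    (hγ12 : ∑ i ∈ Finset.Icc 3 m, γ i < γ 1 + γ 2)
    (hlam2 : (γ 1 ^ 2 + γ 1 * γ 2) * βmax * βh < lam) :
    ∀ θ ∈ Set.Icc βmin βmax, ∀ θh ∈ Set.Icc ε βh,
      |1 - (γ 1 ^ 2 + γ 1 * γ 2) * θ * θh / (lam + γ 1 ^ 2 * θh ^ 2)|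
          + ∑ i ∈ Finset.Icc 3 m, γ 1 * γ i * θ * θh / (lam + γ 1 ^ 2 * θh ^ 2)
        ≤ 1 - γ 1 * (γ 1 + γ 2 - ∑ i ∈ Finset.Icc 3 m, γ i) * βmin * ε
              / (lam + γ 1 ^ 2 * βh ^ 2) ∧
      1 - γ 1 * (γ 1 + γ 2 - ∑ i ∈ Finset.Icc 3 m, γ i) * βmin * ε
          / (lam + γ 1 ^ 2 * βh ^ 2) < 1 := by
  rintro θ ⟨hθ_lo, hθ_hi⟩ θh ⟨hθh_lo, hθh_hi⟩
  have hγ1 : 0 < γ 1 := hγpos 1 (Finset.mem_Icc.2 ⟨le_rfl, by omega⟩)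
  have hγ2 : 0 < γ 2 := hγpos 2 (Finset.mem_Icc.2 ⟨by norm_num, hm⟩)
  have hθ : 0 < θ := hβmin.trans_le hθ_lo
  have hθh : 0 < θh := hε.trans_le hθh_lo
  have hβmax : 0 < βmax := hθ.trans_le hθ_hi
  set S := ∑ i ∈ Finset.Icc 3 m, γ i with hS
  have hgain : (γ 1 ^ 2 + γ 1 * γ 2) * θ * θh ≤ lam := by
    calc (γ 1 ^ 2 + γ 1 * γ 2) * θ * θh ≤ (γ 1 ^ 2 + γ 1 * γ 2) * βmax * βh := by gcongr
      _ ≤ lam := hlam2.le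
  have hgain_pos : 0 < (γ 1 ^ 2 + γ 1 * γ 2) * θ * θh := by positivity
  have hlam : 0 < lam := hgain_pos.trans_le hgain
  have hsum : ∑ i ∈ Finset.Icc 3 m, γ 1 * γ i * θ * θh / (lam + γ 1 ^ 2 * θh ^ 2)
      = γ 1 * S * θ * θh / (lam + γ 1 ^ 2 * θh ^ 2) := by
    rw [hS, Finset.mul_sum, Finset.sum_mul, Finset.sum_mul, Finset.sum_div]
  have hc : 0 < γ 1 * (γ 1 + γ 2 - S) := mul_pos hγ1 (sub_pos.2 hγ12)
  have hmono : γ 1 * (γ 1 + γ 2 - S) * βmin * ε / (lam + γ 1 ^ 2 * βh ^ 2)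
      ≤ γ 1 * (γ 1 + γ 2 - S) * θ * θh / (lam + γ 1 ^ 2 * θh ^ 2) := by
    gcongr
  have hgain_le_denom : (γ 1 ^ 2 + γ 1 * γ 2) * θ * θh ≤ lam + γ 1 ^ 2 * θh ^ 2 :=
    hgain.trans (le_add_of_nonneg_right (by positivity))
  rw [hsum, abs_one_sub_div_add_div hgain_pos.le hgain_le_denom]
  refine ⟨?_, sub_lt_self 1 (by positivity)⟩
  have hfactor : (γ 1 ^ 2 + γ 1 * γ 2) * θ * θh - γ 1 * S * θ * θh
      = γ 1 * (γ 1 + γ 2 - S) * θ * θh := by ring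
  rw [hfactor]
  exact sub_le_sub_left hmono 1

/-- First half of Lemma 6 of the paper: the parameter selection condition (19)
implies the contraction condition (27) for the tracking-error recursion. -/
theorem stmt13 (m : ℕ) (hm : 2 ≤ m) (lam βmin βmax ε βh : ℝ) (γ : ℕ → ℝ)
    (hγpos : ∀ i ∈ Finset.Icc 1 m, 0 < γ i)
    (hlam : 0 < lam) (hβmin : 0 < βmin) (hββ : βmin ≤ βmax)
    (hε : 0 < ε) (hεβ : ε ≤ βh)
    (hγ12 : ∑ i ∈ Finset.Icc 3 m, γ i < γ 1 + γ 2)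
    (hlam2 : (γ 1 ^ 2 + γ 1 * γ 2) * βmax * βh < lam) :
    ∀ θ ∈ Set.Icc βmin βmax, ∀ θh ∈ Set.Icc ε βh,
      |1 - (γ 1 ^ 2 + γ 1 * γ 2) * θ * θh / (lam + γ 1 ^ 2 * θh ^ 2)|
          + ∑ i ∈ Finset.Icc 3 m, γ 1 * γ i * θ * θh / (lam + γ 1 ^ 2 * θh ^ 2)
        ≤ 1 - γ 1 * (γ 1 + γ 2 - ∑ i ∈ Finset.Icc 3 m, γ i) * βmin * ε
              / (lam + γ 1 ^ 2 * βh ^ 2) ∧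
      1 - γ 1 * (γ 1 + γ 2 - ∑ i ∈ Finset.Icc 3 m, γ i) * βmin * ε
          / (lam + γ 1 ^ 2 * βh ^ 2) < 1 :=
  stmt13_general m hm lam βmin βmax ε βh γ hγpos hβmin hε hγ12 hlam2
end

section
/- Let λ, γ₁, γ₂, βmin, βmax, ε, β̂ be positive reals with βmin ≤ βmax, ε ≤ β̂, and λ > (γ₁² + γ₁γ₂)·βmax·β̂. Then for all θ ∈ [βmin, βmax] and all θ̂ ∈ [ε, β̂]: |1 − (γ₁² + γ₁γ₂)·θ̂·θ/(λ + γ₁² θ̂²)| ≤ 1 − (γ₁² + γ₁γ₂)·βmin·ε/(λ + γ₁² β̂²) < 1. -/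
/-- Second half of Lemma 6 of the paper: the parameter selection condition (19)
implies the contraction condition (24) for the input recursion. -/
theorem stmt14 (lam γ₁ γ₂ βmin βmax ε βh : ℝ)
    (hlam : 0 < lam) (hγ₁ : 0 < γ₁) (hγ₂ : 0 < γ₂)
    (hβmin : 0 < βmin) (hββ : βmin ≤ βmax) (hε : 0 < ε) (hεβ : ε ≤ βh)
    (hlam2 : (γ₁ ^ 2 + γ₁ * γ₂) * βmax * βh < lam) :
    ∀ θ ∈ Set.Icc βmin βmax, ∀ θh ∈ Set.Icc ε βh,
      |1 - (γ₁ ^ 2 + γ₁ * γ₂) * θh * θ / (lam + γ₁ ^ 2 * θh ^ 2)|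
        ≤ 1 - (γ₁ ^ 2 + γ₁ * γ₂) * βmin * ε / (lam + γ₁ ^ 2 * βh ^ 2) ∧
      1 - (γ₁ ^ 2 + γ₁ * γ₂) * βmin * ε / (lam + γ₁ ^ 2 * βh ^ 2) < 1 := by
  intro θ hθ θh hθh
  obtain ⟨hθ1, hθ2⟩ := hθ
  obtain ⟨hh1, hh2⟩ := hθh
  have hc : 0 < γ₁ ^ 2 + γ₁ * γ₂ := by positivity
  have hθpos : 0 < θ := lt_of_lt_of_le hβmin hθ1
  have hhpos : 0 < θh := lt_of_lt_of_le hε hh1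
  have hD1 : 0 < lam + γ₁ ^ 2 * θh ^ 2 := by positivity
  have hD2 : 0 < lam + γ₁ ^ 2 * βh ^ 2 := by positivity
  have hm : 0 < (γ₁ ^ 2 + γ₁ * γ₂) * βmin * ε / (lam + γ₁ ^ 2 * βh ^ 2) := by positivity
  constructor
  · have hx1 : (γ₁ ^ 2 + γ₁ * γ₂) * θh * θ / (lam + γ₁ ^ 2 * θh ^ 2) < 1 := by
      rw [div_lt_one hD1]
      have h0 : θh * θ ≤ βh * βmax := mul_le_mul hh2 hθ2 hθpos.le (by linarith)
      have h1 : (γ₁ ^ 2 + γ₁ * γ₂) * θh * θ ≤ (γ₁ ^ 2 + γ₁ * γ₂) * βmax * βh := by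
        nlinarith [mul_le_mul_of_nonneg_left h0 hc.le]
      nlinarith [sq_nonneg (γ₁ * θh)]
    have hx2 : (γ₁ ^ 2 + γ₁ * γ₂) * βmin * ε / (lam + γ₁ ^ 2 * βh ^ 2)
        ≤ (γ₁ ^ 2 + γ₁ * γ₂) * θh * θ / (lam + γ₁ ^ 2 * θh ^ 2) := by
      apply div_le_div₀ (by positivity) ?_ hD1 ?_
      · have h0 : βmin * ε ≤ θ * θh := mul_le_mul hθ1 hh1 hε.le hθpos.le
        nlinarith [mul_le_mul_of_nonneg_left h0 hc.le]
      · nlinarith [mul_le_mul_of_nonneg_left (pow_le_pow_left₀ hhpos.le hh2 2) (sq_nonneg γ₁)]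
    rw [abs_of_nonneg (by linarith)]
    linarith
  · linarith
end
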